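/- For all real parameters α, β, the coefficient functions Ā(τ,σ) = 1/6 + (τ − σ)/2 + α·P_1(τ)·P_1(σ) + β·(P_2(τ) + P_2(σ)), B̄(τ) = 1 − τ, B̂(τ) = 1, C(τ) = τ satisfy (1) the symplectic conditions: B̂(τ)(1 − C(τ)) = B̄(τ) for all τ ∈ [0,1] and B̂(τ)(B̄(σ) − Ā(τ,σ)) = B̂(σ)(B̄(τ) − Ā(σ,τ)) for all τ, σ ∈ [0,1]; and (2) the order conditions ∫₀¹∫₀¹ Ā(τ,σ) dσ dτ = 1/6, ∫₀¹∫₀¹ τ·Ā(τ,σ) dσ dτ = 1/8, and ∫₀¹∫₀¹ Ā(τ,σ)·σ dσ dτ = 1/24. -/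

import Mathlib

/-!
With `B̂ = 1` the symplectic conditions say that `B̄(σ) - Ā(τ,σ)` is symmetric in `τ, σ`; the
antisymmetric part `(τ - σ)/2` of `Ā` cancels exactly `B̄(σ) - B̄(τ) = τ - σ`. Each of the three
double integrals of `Ā` equals `1/6`, `1/8`, resp. `1/24` plus multiples of `∫ P₁`, `∫ P₂` and
`∫ x P₂(x)`, and these vanish because `P₁` is orthogonal to constants and `P₂` to polynomials of
degree at most one on `[0,1]`.
-/

open intervalIntegral

/-- The `n`-th normalized shifted Legendre polynomial on `[0,1]`, via Rodrigues' formula.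
For `n = 0` this formula gives the constant `1`. -/
noncomputable def legP (n : ℕ) (x : ℝ) : ℝ :=
  Real.sqrt (2 * n + 1) / n.factorial *
    iteratedDeriv n (fun t : ℝ => t ^ n * (t - 1) ^ n) x

theorem legP_one (x : ℝ) : legP 1 x = √3 * (2 * x - 1) := by
  norm_num [legP]
  ring

theorem legP_two (x : ℝ) : legP 2 x = √5 * (6 * x ^ 2 - 6 * x + 1) := by
  have hderiv : deriv (fun t : ℝ => t ^ 2 * (t - 1) ^ 2) =
      fun t => 4 * t ^ 3 - 6 * t ^ 2 + 2 * t := by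
    funext t
    simp (disch := fun_prop)
    ring
  simp (disch := fun_prop) [legP, iteratedDeriv_succ, hderiv]
  norm_num
  ring

theorem continuous_legP (n : ℕ) : Continuous (legP n) := by
  have h : ContDiff ℝ ⊤ (fun t : ℝ => t ^ n * (t - 1) ^ n) := by fun_prop
  exact continuous_const.mul (h.continuous_iteratedDeriv n le_top)

theorem integral_cubic (a b c d : ℝ) :
    ∫ x in (0:ℝ)..1, (a + b * x + c * x ^ 2 + d * x ^ 3) = a + b / 2 + c / 3 + d / 4 := by
  simp (disch := (apply Continuous.intervalIntegrable; fun_prop)) only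
    [integral_add, integral_const_mul, integral_pow, integral_const]
  -- `simp` sees `fun x => b * x` eta-reduced to `HMul.hMul b`, which `integral_const_mul` misses
  rw [integral_const_mul, integral_id]
  norm_num
  ring

theorem integral_add_mul_add_mul {h f g : ℝ → ℝ} {a b : ℝ} (hh : Continuous h)
    (hf : Continuous f) (hg : Continuous g) (u v : ℝ) :
    ∫ x in a..b, (h x + u * f x + v * g x) =
      (∫ x in a..b, h x) + u * (∫ x in a..b, f x) + v * ∫ x in a..b, g x := by
  simp (disch := (apply Continuous.intervalIntegrable; fun_prop)) only
    [integral_add, integral_const_mul]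

theorem integral_legP_one : ∫ x in (0:ℝ)..1, legP 1 x = 0 := by
  rw [show legP 1 = fun x => -√3 + 2 * √3 * x + 0 * x ^ 2 + 0 * x ^ 3 from
    funext fun x => by rw [legP_one]; ring, integral_cubic]
  ring

theorem integral_legP_two : ∫ x in (0:ℝ)..1, legP 2 x = 0 := by
  rw [show legP 2 = fun x => √5 + -6 * √5 * x + 6 * √5 * x ^ 2 + 0 * x ^ 3 from
    funext fun x => by rw [legP_two]; ring, integral_cubic]
  ring

theorem integral_mul_legP_two : ∫ x in (0:ℝ)..1, x * legP 2 x = 0 := by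
  rw [show (fun x => x * legP 2 x) = fun x => 0 + √5 * x + -6 * √5 * x ^ 2 + 6 * √5 * x ^ 3 from
    funext fun x => by rw [legP_two]; ring, integral_cubic]
  ring

/-- The paper's `Ā`, with `P₁` and `P₂` replaced by arbitrary functions `p` and `q`. -/
noncomputable def csrknAbar (α β : ℝ) (p q : ℝ → ℝ) (τ σ : ℝ) : ℝ :=
  1 / 6 + (τ - σ) / 2 + α * p τ * p σ + β * (q τ + q σ)

theorem one_sub_sub_csrknAbar_comm (α β : ℝ) (p q : ℝ → ℝ) (τ σ : ℝ) :
    (1 - σ) - csrknAbar α β p q τ σ = (1 - τ) - csrknAbar α β p q σ τ := by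
  unfold csrknAbar
  ring

section Moments

variable {p q : ℝ → ℝ} {α β : ℝ}

theorem integral_csrknAbar (hp : Continuous p) (hq : Continuous q) (τ : ℝ) :
    ∫ σ in (0:ℝ)..1, csrknAbar α β p q τ σ =
      τ / 2 - 1 / 12 + α * (∫ x in (0:ℝ)..1, p x) * p τ + β * (q τ + ∫ x in (0:ℝ)..1, q x) := by
  have h : ∀ σ, csrknAbar α β p q τ σ =
      (1 / 6 + τ / 2 + β * q τ + -1 / 2 * σ + 0 * σ ^ 2 + 0 * σ ^ 3) + α * p τ * p σ + β * q σ :=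
    fun σ => by unfold csrknAbar; ring
  simp only [h]
  rw [integral_add_mul_add_mul (by fun_prop) hp hq, integral_cubic]
  ring

theorem integral_csrknAbar_mul (hp : Continuous p) (hq : Continuous q) (τ : ℝ) :
    ∫ σ in (0:ℝ)..1, csrknAbar α β p q τ σ * σ =
      τ / 4 - 1 / 12 + α * (∫ x in (0:ℝ)..1, x * p x) * p τ +
        β * (q τ / 2 + ∫ x in (0:ℝ)..1, x * q x) := by
  have h : ∀ σ, csrknAbar α β p q τ σ * σ =
      (0 + (1 / 6 + τ / 2 + β * q τ) * σ + -1 / 2 * σ ^ 2 + 0 * σ ^ 3) +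
        α * p τ * (σ * p σ) + β * (σ * q σ) :=
    fun σ => by unfold csrknAbar; ring
  simp only [h]
  rw [integral_add_mul_add_mul (by fun_prop) (by fun_prop) (by fun_prop), integral_cubic]
  ring

theorem integral_integral_csrknAbar (hp : Continuous p) (hq : Continuous q) :
    ∫ τ in (0:ℝ)..1, ∫ σ in (0:ℝ)..1, csrknAbar α β p q τ σ =
      1 / 6 + α * (∫ x in (0:ℝ)..1, p x) ^ 2 + 2 * β * ∫ x in (0:ℝ)..1, q x := by
  set P := ∫ x in (0:ℝ)..1, p x
  set Q := ∫ x in (0:ℝ)..1, q x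
  have h : ∀ τ, ∫ σ in (0:ℝ)..1, csrknAbar α β p q τ σ =
      (-1 / 12 + β * Q + 1 / 2 * τ + 0 * τ ^ 2 + 0 * τ ^ 3) + α * P * p τ + β * q τ :=
    fun τ => by rw [integral_csrknAbar hp hq]; ring
  simp only [h]
  rw [integral_add_mul_add_mul (by fun_prop) hp hq, integral_cubic]
  ring

theorem integral_integral_mul_csrknAbar (hp : Continuous p) (hq : Continuous q) :
    ∫ τ in (0:ℝ)..1, ∫ σ in (0:ℝ)..1, τ * csrknAbar α β p q τ σ =
      1 / 8 + α * (∫ x in (0:ℝ)..1, x * p x) * (∫ x in (0:ℝ)..1, p x) +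
        β * ((∫ x in (0:ℝ)..1, x * q x) + (∫ x in (0:ℝ)..1, q x) / 2) := by
  set P := ∫ x in (0:ℝ)..1, p x
  set Q := ∫ x in (0:ℝ)..1, q x
  have h : ∀ τ, ∫ σ in (0:ℝ)..1, τ * csrknAbar α β p q τ σ =
      (0 + (-1 / 12 + β * Q) * τ + 1 / 2 * τ ^ 2 + 0 * τ ^ 3) + α * P * (τ * p τ) +
        β * (τ * q τ) :=
    fun τ => by rw [integral_const_mul, integral_csrknAbar hp hq]; ring
  simp only [h]
  rw [integral_add_mul_add_mul (by fun_prop) (by fun_prop) (by fun_prop), integral_cubic]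
  ring

theorem integral_integral_csrknAbar_mul (hp : Continuous p) (hq : Continuous q) :
    ∫ τ in (0:ℝ)..1, ∫ σ in (0:ℝ)..1, csrknAbar α β p q τ σ * σ =
      1 / 24 + α * (∫ x in (0:ℝ)..1, p x) * (∫ x in (0:ℝ)..1, x * p x) +
        β * ((∫ x in (0:ℝ)..1, q x) / 2 + ∫ x in (0:ℝ)..1, x * q x) := by
  set P₁ := ∫ x in (0:ℝ)..1, x * p x
  set Q₁ := ∫ x in (0:ℝ)..1, x * q x
  have h : ∀ τ, ∫ σ in (0:ℝ)..1, csrknAbar α β p q τ σ * σ =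
      (-1 / 12 + β * Q₁ + 1 / 4 * τ + 0 * τ ^ 2 + 0 * τ ^ 3) + α * P₁ * p τ + β / 2 * q τ :=
    fun τ => by rw [integral_csrknAbar_mul hp hq]; ring
  simp only [h]
  rw [integral_add_mul_add_mul (by fun_prop) hp hq, integral_cubic]
  ring

end Moments

/-- The two-parameter family
`Ā(τ,σ) = 1/6 + (τ−σ)/2 + αP₁(τ)P₁(σ) + β(P₂(τ)+P₂(σ))`, `B̄(τ) = 1 − τ`, `B̂ = 1`,
`C(τ) = τ` satisfies the symplectic conditions and the fourth-order conditions. -/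
theorem order4_family_symplectic
    (α β : ℝ) (A : ℝ → ℝ → ℝ)
    (hA : ∀ τ σ : ℝ, A τ σ =
      1 / 6 + (τ - σ) / 2 + α * legP 1 τ * legP 1 σ + β * (legP 2 τ + legP 2 σ))
    (Bbar Bhat C : ℝ → ℝ)
    (hBbar : ∀ τ, Bbar τ = 1 - τ) (hBhat : ∀ τ, Bhat τ = 1) (hC : ∀ τ, C τ = τ) :
    ((∀ τ ∈ Set.Icc (0:ℝ) 1, Bhat τ * (1 - C τ) = Bbar τ) ∧
     (∀ τ ∈ Set.Icc (0:ℝ) 1, ∀ σ ∈ Set.Icc (0:ℝ) 1,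
       Bhat τ * (Bbar σ - A τ σ) = Bhat σ * (Bbar τ - A σ τ))) ∧
    ((∫ τ in (0:ℝ)..1, ∫ σ in (0:ℝ)..1, A τ σ) = 1 / 6 ∧
     (∫ τ in (0:ℝ)..1, ∫ σ in (0:ℝ)..1, τ * A τ σ) = 1 / 8 ∧
     (∫ τ in (0:ℝ)..1, ∫ σ in (0:ℝ)..1, A τ σ * σ) = 1 / 24) := by
  obtain rfl : A = csrknAbar α β (legP 1) (legP 2) := funext₂ hA
  have hP₁ := continuous_legP 1
  have hP₂ := continuous_legP 2
  refine ⟨⟨fun τ _ => by rw [hBhat, hC, hBbar, one_mul], fun τ _ σ _ => ?_⟩, ?_, ?_, ?_⟩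
  · rw [hBhat, hBhat, hBbar, hBbar, one_mul, one_mul, one_sub_sub_csrknAbar_comm]
  · rw [integral_integral_csrknAbar hP₁ hP₂, integral_legP_one, integral_legP_two]
    ring
  · rw [integral_integral_mul_csrknAbar hP₁ hP₂, integral_legP_one, integral_legP_two,
      integral_mul_legP_two]
    ring
  · rw [integral_integral_csrknAbar_mul hP₁ hP₂, integral_legP_one, integral_legP_two,
      integral_mul_legP_two]
    ring
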